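/- Assume strict feasibility, i.e., Pmax·∑_k b_k > η. Let (x*, α*) be a global minimizer of (P2) and let λ* > 0 satisfy the KKT system at (x*, α*, λ*). Let S = {k : x*_k = α*·Pmax} and D_S = η − Pmax·∑_{k∈S} b_k. Then: D_S > 0; S ≠ ∅; S ≠ Fin K; and α* = (1/Pmax)·( (∑_{k∈S} h_k) / ((σ² + λ*·D_S)/Pmax + ∑_{k∈S} h_k²) )². -/
import Mathlib


open Finset
open scoped Classical

/-- Objective of problem (P2). -/
noncomputable def objP2 (K : ℕ) (h : Fin K → ℝ) (σ2 : ℝ)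
    (x : Fin K → ℝ) (α : ℝ) : ℝ :=
  ∑ k, (h k) ^ 2 * x k - 2 * ∑ k, h k * Real.sqrt (x k) + α * σ2

/-- Feasibility for problem (P2). -/
def FeasP2 (K : ℕ) (b : Fin K → ℝ) (η Pmax : ℝ)
    (x : Fin K → ℝ) (α : ℝ) : Prop :=
  (∑ k, b k * x k) ≥ η * α ∧ (∀ k, 0 ≤ x k ∧ x k ≤ Pmax * α) ∧ 0 < α

/-- The threshold function `ι_k(α)`. -/
noncomputable def iota (K : ℕ) (h b : Fin K → ℝ) (Pmax : ℝ)
    (k : Fin K) (α : ℝ) : ℝ :=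
  (h k) ^ 2 / b k * (1 - 1 / (h k * Real.sqrt (α * Pmax)))

/-- The KKT system for problem (P2). -/
def KKT (K : ℕ) (h b : Fin K → ℝ) (σ2 η Pmax : ℝ)
    (x : Fin K → ℝ) (α lam : ℝ) : Prop :=
  0 ≤ lam ∧ FeasP2 K b η Pmax x α ∧
  (∀ k,
    (lam < iota K h b Pmax k α →
      x k = (h k) ^ 2 / ((h k) ^ 2 - lam * b k) ^ 2) ∧
    (iota K h b Pmax k α ≤ lam → x k = α * Pmax)) ∧
  lam * (η * α - ∑ k, b k * x k) = 0 ∧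
  (σ2 + lam * η) / Pmax =
    ∑ k, max 0 (h k / Real.sqrt (Pmax * α) - ((h k) ^ 2 - lam * b k))

set_option maxHeartbeats 2000000 in
theorem stmt_11 (K : ℕ) (hK : 1 ≤ K) (h b : Fin K → ℝ)
    (hh : ∀ k, 0 < h k) (hb : ∀ k, 0 < b k)
    (σ2 η Pmax : ℝ) (hσ : 0 < σ2) (hη : 0 < η) (hP : 0 < Pmax)
    (hstrict : Pmax * ∑ k, b k > η)
    (x : Fin K → ℝ) (α lam : ℝ)
    (hfeas : FeasP2 K b η Pmax x α)
    (hmin : ∀ (y : Fin K → ℝ) (β : ℝ), FeasP2 K b η Pmax y β →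
      objP2 K h σ2 x α ≤ objP2 K h σ2 y β)
    (hlam : 0 < lam)
    (hKKT : KKT K h b σ2 η Pmax x α lam) :
    let S : Finset (Fin K) := Finset.univ.filter (fun k => x k = α * Pmax)
    let DS : ℝ := η - Pmax * ∑ k ∈ S, b k
    0 < DS ∧ S ≠ ∅ ∧ S ≠ Finset.univ ∧
      α = (1 / Pmax) *
        ((∑ k ∈ S, h k) / ((σ2 + lam * DS) / Pmax + ∑ k ∈ S, (h k) ^ 2)) ^ 2 := by
  intro S DS
  obtain ⟨hl0, hfeas', hcond, hcs, hstat⟩ := hKKT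
  obtain ⟨hbal, hbox, hα⟩ := hfeas'
  have hPα : 0 < Pmax * α := mul_pos hP hα
  set s := Real.sqrt (Pmax * α) with hsdef
  have hs0 : 0 < s := Real.sqrt_pos.mpr hPα
  have hs2 : s ^ 2 = Pmax * α := Real.sq_sqrt hPα.le
  have hSdef : S = Finset.univ.filter (fun k => x k = α * Pmax) := rfl
  have hDSdef : DS = η - Pmax * ∑ k ∈ S, b k := rfl
  clear_value S DS
  -- rewrite iota
  have hiota' : ∀ k, iota K h b Pmax k α = ((h k) ^ 2 - h k / s) / b k := by
    intro k
    unfold iota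
    rw [show α * Pmax = Pmax * α by ring, ← hsdef]
    have hb' := (hb k).ne'
    have hh' := (hh k).ne'
    field_simp
  have hequiv : ∀ k, (iota K h b Pmax k α ≤ lam ↔ (h k) ^ 2 - lam * b k ≤ h k / s) := by
    intro k
    rw [hiota' k, div_le_iff₀ (hb k)]
    constructor <;> intro H <;> nlinarith
  have hequiv' : ∀ k, (lam < iota K h b Pmax k α ↔ h k / s < (h k) ^ 2 - lam * b k) := by
    intro k
    rw [hiota' k, lt_div_iff₀ (hb k)]
    constructor <;> intro H <;> nlinarith
  -- key characterization of S
  have hkey : ∀ k, (x k = α * Pmax ↔ iota K h b Pmax k α ≤ lam) := by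
    intro k
    constructor
    · intro hk
      by_contra H
      have hlt : h k / s < (h k) ^ 2 - lam * b k := (hequiv' k).mp (lt_of_not_ge H)
      have hc : 0 < (h k) ^ 2 - lam * b k := lt_trans (div_pos (hh k) hs0) hlt
      have hx := (hcond k).1 (lt_of_not_ge H)
      have hlt2 : h k < s * ((h k) ^ 2 - lam * b k) := by
        rw [div_lt_iff₀ hs0] at hlt; linarith [hlt]
      have : (h k) ^ 2 / ((h k) ^ 2 - lam * b k) ^ 2 < Pmax * α := by
        rw [div_lt_iff₀ (by positivity)]
        nlinarith [hh k, hs0, hc, hlt2]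
      rw [hx] at hk
      rw [hk] at this
      linarith
    · exact (hcond k).2
  -- positivity of x off S
  have hxpos : ∀ k, x k ≠ α * Pmax → 0 < x k := by
    intro k hk
    have H : ¬ iota K h b Pmax k α ≤ lam := fun H => hk ((hcond k).2 H)
    have hlt : h k / s < (h k) ^ 2 - lam * b k := (hequiv' k).mp (lt_of_not_ge H)
    have hc : 0 < (h k) ^ 2 - lam * b k := lt_trans (div_pos (hh k) hs0) hlt
    rw [(hcond k).1 (lt_of_not_ge H)]
    exact div_pos (pow_pos (hh k) 2) (pow_pos hc 2)
  -- complementary slackness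
  have hsum : ∑ k, b k * x k = η * α := by
    rcases mul_eq_zero.mp hcs with H | H
    · exact absurd H hlam.ne'
    · linarith
  -- S ≠ univ
  have hSuniv : S ≠ Finset.univ := by
    intro H
    have hall : ∀ k, x k = α * Pmax := by
      intro k
      have : k ∈ S := H ▸ Finset.mem_univ k
      rw [hSdef, Finset.mem_filter] at this
      exact this.2
    have : ∑ k, b k * x k = α * Pmax * ∑ k, b k := by
      rw [Finset.mul_sum]
      exact Finset.sum_congr rfl fun k _ => by rw [hall k]; ring
    rw [this] at hsum
    have : Pmax * ∑ k, b k = η :=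
      mul_right_cancel₀ hα.ne' (by linear_combination hsum)
    linarith
  -- get k0 outside S
  obtain ⟨k0, hk0⟩ : ∃ k, k ∉ S := by
    by_contra H
    push_neg at H
    exact hSuniv (Finset.eq_univ_iff_forall.mpr H)
  have hk0x : x k0 ≠ α * Pmax := by
    intro H
    exact hk0 (by rw [hSdef, Finset.mem_filter]; exact ⟨Finset.mem_univ _, H⟩)
  -- split sum
  have hsplit : ∑ k, b k * x k
      = (∑ k ∈ S, b k * x k) + ∑ k ∈ Finset.univ.filter (fun k => ¬ x k = α * Pmax), b k * x k := by
    rw [hSdef]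
    exact (Finset.sum_filter_add_sum_filter_not Finset.univ _ _).symm
  have hSsum : ∑ k ∈ S, b k * x k = α * Pmax * ∑ k ∈ S, b k := by
    rw [Finset.mul_sum]
    refine Finset.sum_congr rfl fun k hk => ?_
    rw [hSdef, Finset.mem_filter] at hk
    rw [hk.2]; ring
  have hrest : 0 < ∑ k ∈ Finset.univ.filter (fun k => ¬ x k = α * Pmax), b k * x k := by
    have hmem : k0 ∈ Finset.univ.filter (fun k => ¬ x k = α * Pmax) := by
      rw [Finset.mem_filter]; exact ⟨Finset.mem_univ _, hk0x⟩
    have hpos : 0 < b k0 * x k0 := mul_pos (hb k0) (hxpos k0 hk0x)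
    have h2 : b k0 * x k0 ≤ ∑ k ∈ Finset.univ.filter (fun k => ¬ x k = α * Pmax), b k * x k :=
      Finset.single_le_sum (f := fun k => b k * x k)
        (fun k _ => mul_nonneg (hb k).le (hbox k).1) hmem
    linarith
  -- DS > 0
  have hDS : 0 < DS := by
    have hDSα : DS * α = ∑ k ∈ Finset.univ.filter (fun k => ¬ x k = α * Pmax), b k * x k := by
      rw [hDSdef]
      have := hsplit
      rw [hsum, hSsum] at this
      linear_combination this
    nlinarith [hrest, hα, hDSα]
  -- stationarity rewrite
  have hmaxeq : ∀ k, max 0 (h k / s - ((h k) ^ 2 - lam * b k))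
      = if x k = α * Pmax then h k / s - ((h k) ^ 2 - lam * b k) else 0 := by
    intro k
    by_cases hk : x k = α * Pmax
    · rw [if_pos hk, max_eq_right]
      have := (hequiv k).mp ((hkey k).mp hk)
      linarith
    · rw [if_neg hk, max_eq_left]
      have H : ¬ iota K h b Pmax k α ≤ lam := fun H => hk ((hkey k).mpr H)
      have := (hequiv' k).mp (lt_of_not_ge H)
      linarith
  have hstat2 : (σ2 + lam * η) / Pmax
      = ∑ k ∈ S, (h k / s - ((h k) ^ 2 - lam * b k)) := by
    rw [hstat, hSdef, Finset.sum_filter]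
    exact Finset.sum_congr rfl fun k _ => hmaxeq k
  have hstat3 : (σ2 + lam * η) / Pmax
      = (∑ k ∈ S, h k) / s - (∑ k ∈ S, (h k) ^ 2) + lam * ∑ k ∈ S, b k := by
    have e : ∀ k ∈ S, h k / s - ((h k) ^ 2 - lam * b k)
        = (h k / s - (h k) ^ 2) + lam * b k := fun k _ => by ring
    rw [hstat2, Finset.sum_congr rfl e, Finset.sum_add_distrib,
      Finset.sum_sub_distrib, Finset.sum_div, Finset.mul_sum]
  refine ⟨hDS, ?_, hSuniv, ?_⟩
  · -- S ≠ ∅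
    intro H
    rw [H] at hstat3
    simp only [Finset.sum_empty, zero_div, sub_zero, mul_zero, add_zero, zero_sub,
      neg_zero] at hstat3
    have hpos : 0 < (σ2 + lam * η) / Pmax :=
      div_pos (by nlinarith [mul_pos hlam hη]) hP
    linarith
  · -- formula for α
    have hP0 : Pmax ≠ 0 := hP.ne'
    have hA : (σ2 + lam * DS) / Pmax + ∑ k ∈ S, (h k) ^ 2 = (∑ k ∈ S, h k) / s := by
      rw [hDSdef]
      have e1 : (σ2 + lam * (η - Pmax * ∑ k ∈ S, b k)) / Pmax
          = (σ2 + lam * η) / Pmax - lam * ∑ k ∈ S, b k := by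
        field_simp
        ring
      rw [e1]
      linarith [hstat3]
    have hApos : 0 < (σ2 + lam * DS) / Pmax + ∑ k ∈ S, (h k) ^ 2 := by
      have h1 : (0:ℝ) ≤ ∑ k ∈ S, (h k) ^ 2 :=
        Finset.sum_nonneg fun k _ => sq_nonneg _
      have h2 : 0 < (σ2 + lam * DS) / Pmax :=
        div_pos (by nlinarith [mul_pos hlam hDS]) hP
      linarith
    have hT : (∑ k ∈ S, h k)
        = ((σ2 + lam * DS) / Pmax + ∑ k ∈ S, (h k) ^ 2) * s :=
      (div_eq_iff hs0.ne').mp hA.symm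
    have hTA : (∑ k ∈ S, h k) / ((σ2 + lam * DS) / Pmax + ∑ k ∈ S, (h k) ^ 2) = s := by
      rw [hT, mul_comm, mul_div_assoc, div_self hApos.ne', mul_one]
    rw [hTA, hs2]
    field_simp
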